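/- Let (X,d) be a complete metric space, A, B nonempty closed subsets of X with A₀, B₀ nonempty, T : A → B a proximal contraction with T(A₀) ⊆ B₀, and suppose B is approximatively compact with respect to A. Then T has a unique best proximity point, and for any x₀ ∈ A₀ the sequence defined by d(xₙ₊₁, T xₙ) = dist(A,B) converges to it. (Basha's proximal contraction principle.) -/

import Mathlib

/-!
Starting from `x₀ ∈ A₀`, the hypothesis `T(A₀) ⊆ B₀` lets one keep choosing `xₙ₊₁ ∈ A₀` with
`d(xₙ₊₁, T xₙ) = dist(A,B)`; the proximal contraction makes this sequence geometrically Cauchy,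
so it converges to some `p ∈ A`. Since `d(p, T xₙ) → dist(A,B) = dist(p,B)`, approximative
compactness yields a limit point `z ∈ B` of `(T xₙ)` with `d(p,z) = dist(A,B)`, so `p ∈ A₀`.
A proximal successor `w` of `p` is then the limit of `xₙ₊₁`, hence `w = p`, which makes `p` a best
proximity point. Applying the contraction to `(xₙ, p)` against `(xₙ₊₁, p)` gives
`d(xₙ₊₁, p) ≤ k·d(xₙ, p)`, which proves both uniqueness and convergence of every such sequence.
-/

open Metric Filter Topology

noncomputable def setDist {X : Type*} [MetricSpace X] (A B : Set X) : ℝ :=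
  sInf (Set.image2 dist A B)

section ProximalContraction

variable {X : Type*} [MetricSpace X] {A B : Set X} {T : X → X} {k : ℝ}

/-- The set `A₀` of points of `A` that realise `dist(A,B)`. -/
def proximalSet (A B : Set X) : Set X :=
  {a ∈ A | ∃ b ∈ B, dist a b = setDist A B}

def IsApproximativelyCompactWrt (B A : Set X) : Prop :=
  ∀ y : ℕ → X, (∀ n, y n ∈ B) → ∀ x ∈ A,
    Tendsto (fun n ↦ dist x (y n)) atTop (𝓝 (infDist x B)) →
    ∃ z : X, ∃ φ : ℕ → ℕ, StrictMono φ ∧ Tendsto (y ∘ φ) atTop (𝓝 z)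

def IsProximalContraction (A B : Set X) (T : X → X) (k : ℝ) : Prop :=
  ∀ x ∈ A, ∀ y ∈ A, ∀ u ∈ A, ∀ v ∈ A,
    dist u (T x) = setDist A B → dist v (T y) = setDist A B → dist u v ≤ k * dist x y

theorem setDist_le_dist {a b : X} (ha : a ∈ A) (hb : b ∈ B) : setDist A B ≤ dist a b :=
  csInf_le ⟨0, by rintro r ⟨a', -, b', -, rfl⟩; exact dist_nonneg⟩ (Set.mem_image2_of_mem ha hb)

theorem setDist_le_infDist (hB : B.Nonempty) {a : X} (ha : a ∈ A) : setDist A B ≤ infDist a B := by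
  by_contra! hlt
  obtain ⟨b, hb, hab⟩ := (infDist_lt_iff hB).mp hlt
  exact (setDist_le_dist ha hb).not_gt hab

theorem tendsto_dist_of_tendsto_of_tendsto_dist {u w : ℕ → X} {p : X} {c : ℝ}
    (hu : Tendsto u atTop (𝓝 p)) (huw : Tendsto (fun n ↦ dist (u n) (w n)) atTop (𝓝 c)) :
    Tendsto (fun n ↦ dist p (w n)) atTop (𝓝 c) := by
  have hgap : Tendsto (fun n ↦ dist p (w n) - dist (u n) (w n)) atTop (𝓝 0) :=
    squeeze_zero_norm (fun n ↦ (abs_dist_sub_le p (u n) (w n)).trans_eq (dist_comm _ _))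
      (tendsto_iff_dist_tendsto_zero.mp hu)
  simpa using hgap.add huw

structure IsProximalIterate (A B : Set X) (T : X → X) (x : ℕ → X) : Prop where
  mem : ∀ n, x n ∈ A
  dist_succ : ∀ n, dist (x (n + 1)) (T (x n)) = setDist A B

theorem IsProximalIterate.const {p : X} (hp : p ∈ A) (hpT : dist p (T p) = setDist A B) :
    IsProximalIterate A B T fun _ ↦ p :=
  ⟨fun _ ↦ hp, fun _ ↦ hpT⟩

theorem exists_isProximalIterate
    (hTA0 : Set.MapsTo T (proximalSet A B) {b ∈ B | ∃ a ∈ A, dist a b = setDist A B})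
    {x₀ : X} (hx₀ : x₀ ∈ proximalSet A B) :
    ∃ x : ℕ → X, x 0 = x₀ ∧ IsProximalIterate A B T x := by
  have hstep : ∀ a : proximalSet A B, ∃ a' : proximalSet A B, dist (a' : X) (T a) = setDist A B :=
    fun a ↦
      let ⟨hTa, a', ha', hd⟩ := hTA0 a.2
      ⟨⟨a', ha', T a, hTa, hd⟩, hd⟩
  choose g hg using hstep
  refine ⟨fun n ↦ g^[n] ⟨x₀, hx₀⟩, rfl, fun n ↦ (g^[n] _).2.1, fun n ↦ ?_⟩
  simp only [Function.iterate_succ_apply']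
  exact hg _

theorem IsProximalIterate.mem_proximalSet_of_tendsto (hB : B.Nonempty) (hBc : IsClosed B)
    (hTB : Set.MapsTo T A B) (happrox : IsApproximativelyCompactWrt B A) {x : ℕ → X} {p : X}
    (hx : IsProximalIterate A B T x) (hp : p ∈ A) (hxp : Tendsto x atTop (𝓝 p)) :
    p ∈ proximalSet A B := by
  have hTxB : ∀ n, T (x n) ∈ B := fun n ↦ hTB (hx.mem n)
  have hdist : Tendsto (fun n ↦ dist p (T (x n))) atTop (𝓝 (setDist A B)) :=
    tendsto_dist_of_tendsto_of_tendsto_dist (hxp.comp (tendsto_add_atTop_nat 1))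
      (funext hx.dist_succ ▸ tendsto_const_nhds)
  have hinf : infDist p B = setDist A B :=
    le_antisymm (ge_of_tendsto hdist (Eventually.of_forall fun n ↦ infDist_le_dist_of_mem (hTxB n)))
      (setDist_le_infDist hB hp)
  obtain ⟨z, φ, hφ, hz⟩ := happrox _ hTxB p hp (hinf ▸ hdist)
  refine ⟨hp, z, hBc.mem_of_tendsto hz (Eventually.of_forall fun n ↦ hTxB (φ n)), ?_⟩
  exact tendsto_nhds_unique (tendsto_const_nhds.dist hz) (hdist.comp hφ.tendsto_atTop)

namespace IsProximalContraction

variable (hT : IsProximalContraction A B T k)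
include hT

theorem dist_succ_le {x y : ℕ → X} (hx : IsProximalIterate A B T x)
    (hy : IsProximalIterate A B T y) (n m : ℕ) :
    dist (x (n + 1)) (y (m + 1)) ≤ k * dist (x n) (y m) :=
  hT _ (hx.mem n) _ (hy.mem m) _ (hx.mem (n + 1)) _ (hy.mem (m + 1)) (hx.dist_succ n)
    (hy.dist_succ m)

theorem dist_le_pow_mul (hk0 : 0 ≤ k) {x y : ℕ → X} (hx : IsProximalIterate A B T x)
    (hy : IsProximalIterate A B T y) (m : ℕ) :
    ∀ n, dist (x n) (y (m + n)) ≤ k ^ n * dist (x 0) (y m)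
  | 0 => by simp
  | n + 1 => calc
      dist (x (n + 1)) (y (m + n + 1)) ≤ k * dist (x n) (y (m + n)) := hT.dist_succ_le hx hy n _
      _ ≤ k * (k ^ n * dist (x 0) (y m)) := by gcongr; exact dist_le_pow_mul hk0 hx hy m n
      _ = k ^ (n + 1) * dist (x 0) (y m) := by ring

theorem cauchySeq (hk0 : 0 ≤ k) (hk1 : k < 1) {x : ℕ → X} (hx : IsProximalIterate A B T x) :
    CauchySeq x :=
  cauchySeq_of_le_geometric k (dist (x 0) (x 1)) hk1 fun n ↦ by
    simpa [add_comm, mul_comm] using hT.dist_le_pow_mul hk0 hx hx 1 n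

theorem tendsto (hk0 : 0 ≤ k) (hk1 : k < 1) {x : ℕ → X} {p : X} (hx : IsProximalIterate A B T x)
    (hp : p ∈ A) (hpT : dist p (T p) = setDist A B) : Tendsto x atTop (𝓝 p) := by
  rw [tendsto_iff_dist_tendsto_zero]
  refine squeeze_zero (fun _ ↦ dist_nonneg)
    (fun n ↦ hT.dist_le_pow_mul hk0 hx (.const hp hpT) 0 n) ?_
  simpa using (tendsto_pow_atTop_nhds_zero_of_lt_one hk0 hk1).mul_const (dist (x 0) p)

theorem eq_of_dist_eq_setDist (hk1 : k < 1) {p q : X} (hp : p ∈ A) (hq : q ∈ A)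
    (hpT : dist p (T p) = setDist A B) (hqT : dist q (T q) = setDist A B) : q = p := by
  have h := hT q hq p hp q hq p hp hqT hpT
  exact dist_le_zero.mp (by nlinarith [dist_nonneg (x := q) (y := p)])

theorem eq_of_tendsto {x : ℕ → X} {p w : X} (hx : IsProximalIterate A B T x)
    (hxp : Tendsto x atTop (𝓝 p)) (hp : p ∈ A) (hw : w ∈ A) (hwT : dist w (T p) = setDist A B) :
    w = p := by
  have hxw : Tendsto (fun n ↦ x (n + 1)) atTop (𝓝 w) := by
    rw [tendsto_iff_dist_tendsto_zero]
    refine squeeze_zero (fun _ ↦ dist_nonneg)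
      (fun n ↦ hT _ (hx.mem n) _ hp _ (hx.mem (n + 1)) _ hw (hx.dist_succ n) hwT) ?_
    simpa using (tendsto_iff_dist_tendsto_zero.mp hxp).const_mul k
  exact tendsto_nhds_unique hxw (hxp.comp (tendsto_add_atTop_nat 1))

end IsProximalContraction

end ProximalContraction

theorem statement12_general {X : Type*} [MetricSpace X] [CompleteSpace X] (A B : Set X)
    (hB : B.Nonempty) (hAc : IsClosed A) (hBc : IsClosed B)
    (T : X → X) (hT : Set.MapsTo T A B)
    (k : ℝ) (hk0 : 0 ≤ k) (hk1 : k < 1)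
    (hcontr : ∀ x ∈ A, ∀ y ∈ A, ∀ u ∈ A, ∀ v ∈ A,
      dist u (T x) = setDist A B → dist v (T y) = setDist A B →
      dist u v ≤ k * dist x y)
    (hA0 : {a ∈ A | ∃ b ∈ B, dist a b = setDist A B}.Nonempty)
    (hTA0 : Set.MapsTo T {a ∈ A | ∃ b ∈ B, dist a b = setDist A B}
      {b ∈ B | ∃ a ∈ A, dist a b = setDist A B})
    (happrox : ∀ (y : ℕ → X), (∀ n, y n ∈ B) → ∀ x ∈ A,
      Tendsto (fun n => dist x (y n)) atTop (𝓝 (infDist x B)) →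
      ∃ z : X, ∃ φ : ℕ → ℕ, StrictMono φ ∧ Tendsto (y ∘ φ) atTop (𝓝 z)) :
    ∃ p ∈ A, dist p (T p) = setDist A B ∧
      (∀ q ∈ A, dist q (T q) = setDist A B → q = p) ∧
      (∀ x : ℕ → X, (∀ n, x n ∈ A) →
        x 0 ∈ {a ∈ A | ∃ b ∈ B, dist a b = setDist A B} →
        (∀ n, dist (x (n + 1)) (T (x n)) = setDist A B) →
        Tendsto x atTop (𝓝 p)) := by
  have hcontr : IsProximalContraction A B T k := hcontr
  obtain ⟨x₀, hx₀⟩ := hA0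
  obtain ⟨x, -, hx⟩ := exists_isProximalIterate hTA0 hx₀
  obtain ⟨p, hxp⟩ := cauchySeq_tendsto_of_complete (hcontr.cauchySeq hk0 hk1 hx)
  have hpA : p ∈ A := hAc.mem_of_tendsto hxp (Eventually.of_forall hx.mem)
  have hpA0 := hx.mem_proximalSet_of_tendsto hB hBc hT happrox hpA hxp
  obtain ⟨-, w, hwA, hwT⟩ := hTA0 hpA0
  have hpT : dist p (T p) = setDist A B := hcontr.eq_of_tendsto hx hxp hpA hwA hwT ▸ hwT
  exact ⟨p, hpA, hpT, fun q hqA hqT ↦ hcontr.eq_of_dist_eq_setDist hk1 hpA hqA hpT hqT,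
    fun y hyA _ hyT ↦ hcontr.tendsto hk0 hk1 ⟨hyA, hyT⟩ hpA hpT⟩

theorem statement12 {X : Type*} [MetricSpace X] [CompleteSpace X] (A B : Set X)
    (hA : A.Nonempty) (hB : B.Nonempty) (hAc : IsClosed A) (hBc : IsClosed B)
    (T : X → X) (hT : Set.MapsTo T A B)
    (k : ℝ) (hk0 : 0 ≤ k) (hk1 : k < 1)
    (hcontr : ∀ x ∈ A, ∀ y ∈ A, ∀ u ∈ A, ∀ v ∈ A,
      dist u (T x) = setDist A B → dist v (T y) = setDist A B →
      dist u v ≤ k * dist x y)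
    (hA0 : {a ∈ A | ∃ b ∈ B, dist a b = setDist A B}.Nonempty)
    (hB0 : {b ∈ B | ∃ a ∈ A, dist a b = setDist A B}.Nonempty)
    (hTA0 : Set.MapsTo T {a ∈ A | ∃ b ∈ B, dist a b = setDist A B}
      {b ∈ B | ∃ a ∈ A, dist a b = setDist A B})
    (happrox : ∀ (y : ℕ → X), (∀ n, y n ∈ B) → ∀ x ∈ A,
      Tendsto (fun n => dist x (y n)) atTop (𝓝 (infDist x B)) →
      ∃ z : X, ∃ φ : ℕ → ℕ, StrictMono φ ∧ Tendsto (y ∘ φ) atTop (𝓝 z)) :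
    ∃ p ∈ A, dist p (T p) = setDist A B ∧
      (∀ q ∈ A, dist q (T q) = setDist A B → q = p) ∧
      (∀ x : ℕ → X, (∀ n, x n ∈ A) →
        x 0 ∈ {a ∈ A | ∃ b ∈ B, dist a b = setDist A B} →
        (∀ n, dist (x (n + 1)) (T (x n)) = setDist A B) →
        Tendsto x atTop (𝓝 p)) :=
  statement12_general A B hB hAc hBc T hT k hk0 hk1 hcontr hA0 hTA0 happrox
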